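/- arXiv:1212.1029 — 3 statements merged into one kernel-verified Lean document; each statement's English description precedes it below -/
import Mathlib

section
/- Let G be a connected graph with maximum degree Δ ≥ 3 and γ ≥ 2. If χ_γ(G) = Δ·((Δ-1)^γ - 1)/(Δ-2) + 1 =: M+1, then G is Δ-regular with exactly M+1 vertices, girth 2γ+1, and diameter γ (i.e., G is a Moore graph). -/
/-- The γ-th power of a graph: two vertices are adjacent iff their distance in G is at most γ. -/
def SimpleGraph.power {V : Type*} (G : SimpleGraph V) (γ : ℕ) : SimpleGraph V where
  Adj u v := u ≠ v ∧ G.Reachable u v ∧ G.dist u v ≤ γ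
  symm := ⟨fun u v => by
    rintro ⟨h1, h2, h3⟩
    exact ⟨h1.symm, h2.symm, by rwa [SimpleGraph.dist_comm]⟩⟩
  loopless := ⟨fun v => by simp⟩

noncomputable instance {V : Type*} (G : SimpleGraph V) (γ : ℕ) :
    DecidableRel (G.power γ).Adj := Classical.decRel _

/-!
Write `M = mooreNumber Δ γ`. Counting by distance from a vertex, every ball of radius `γ` has at
most `1 + M` vertices, so `G ^ γ` has maximum degree at most `M`. If one ball were smaller, `G ^ γ`
would be a connected graph with a vertex of degree below `M`, and colouring greedily in decreasing
distance from that vertex would use only `M` colours. Hence every ball is full, and equality in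
the count forces breadth-first search from every vertex to build a tree down to depth `γ`: this
gives `Δ`-regularity and girth at least `2γ + 1`. If some vertex lay outside a ball, there would
be vertices `a`, `b` at distance `γ + 1`, and Lovász's argument from the proof of Brooks' theorem
(give `a` and `b` the same colour, then colour towards a common neighbour `c` of `a` and `b` in
`G ^ γ`) would again colour `G ^ γ` with `M` colours. So `G` has `1 + M` vertices and diameter
`γ`, and an edge between two vertices at distance `γ` from a third closes a cycle of length at
most `2γ + 1`.
-/

open Finset

namespace SimpleGraph

variable {V : Type*} {G : SimpleGraph V} {u v w x y : V}

theorem Reachable.exists_adj_dist_add_one_eq (h : G.Reachable v u) (hne : v ≠ u) :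
    ∃ w, G.Adj w u ∧ G.dist v w + 1 = G.dist v u := by
  obtain ⟨p, hp⟩ := h.symm.exists_walk_length_eq_dist
  have hnil : ¬p.Nil := Walk.not_nil_of_ne hne.symm
  have hadj : G.Adj p.snd u := (p.adj_snd hnil).symm
  refine ⟨p.snd, hadj, le_antisymm ?_ ?_⟩
  · rw [dist_comm, dist_comm (u := v), ← hp, ← p.length_tail_add_one hnil]
    exact Nat.add_le_add_right (dist_le p.tail) 1
  · simpa [dist_eq_one_iff_adj.mpr hadj] using hadj.reachable.dist_triangle_right v

theorem Connected.exists_dist_eq_of_le (hconn : G.Connected) {k : ℕ} (hk : k ≤ G.dist v u) :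
    ∃ w, G.dist v w = k := by
  obtain ⟨n, hn⟩ : ∃ n, G.dist v u = n := ⟨_, rfl⟩
  induction n generalizing u with
  | zero => exact ⟨v, by simp_all⟩
  | succ n ih =>
    obtain hk | hk := eq_or_lt_of_le (hn ▸ hk)
    · exact ⟨u, hn.trans hk.symm⟩
    · have hne : v ≠ u := by rintro rfl; simp at hn
      obtain ⟨w, -, hw⟩ := (hconn v u).exists_adj_dist_add_one_eq hne
      exact ih (u := w) (by omega) (by omega)

/-- Breadth-first search from `v` produces a tree up to depth `r`, except for edges between
vertices at distance `r`. -/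
structure IsTreeLikeAt (G : SimpleGraph V) (v : V) (r : ℕ) : Prop where
  eq_of_adj_of_dist_add_one_eq : ∀ ⦃w x y⦄, G.dist v w ≤ r → G.Adj x w → G.Adj y w →
    G.dist v x + 1 = G.dist v w → G.dist v y + 1 = G.dist v w → x = y
  dist_ne_of_adj : ∀ ⦃w y⦄, G.dist v w < r → G.Adj w y → G.dist v y ≠ G.dist v w

theorem IsTreeLikeAt.le_length_of_isCycle {r : ℕ} (h : G.IsTreeLikeAt v r) {c : G.Walk v v}
    (hc : c.IsCycle) : 2 * r + 1 ≤ c.length := by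
  have hadj : ∀ j < c.length, G.Adj (c.getVert j) (c.getVert (j + 1)) :=
    fun j hj ↦ c.adj_getVert_succ hj
  -- a step along the cycle can neither return to the unique parent nor, below depth `r`,
  -- stay at the same depth
  have step : ∀ j, 1 ≤ j → j < c.length → j ≤ r → G.dist v (c.getVert j) = j →
      G.dist v (c.getVert (j - 1)) = j - 1 →
      j ≤ G.dist v (c.getVert (j + 1)) ∧ (j < r → G.dist v (c.getVert (j + 1)) = j + 1) := by
    intro j hj1 hjl hjr hdj hdj'
    have hprev : G.Adj (c.getVert (j - 1)) (c.getVert j) := by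
      simpa [Nat.sub_add_cancel hj1] using hadj (j - 1) (by omega)
    have hparent : G.dist v (c.getVert (j + 1)) + 1 ≠ j := fun heq ↦
      hc.getVert_sub_one_ne_getVert_add_one hjl.le <|
        h.eq_of_adj_of_dist_add_one_eq (by omega) hprev (hadj j hjl).symm (by omega) (by omega)
    have hsame : j < r → G.dist v (c.getVert (j + 1)) ≠ j := fun hjr heq ↦
      h.dist_ne_of_adj (by omega) (hadj j hjl) (by omega)
    have := (hadj j hjl).diff_dist_adj (u := v)
    omega
  have geodesic : ∀ j, j ≤ r → j < c.length → G.dist v (c.getVert j) = j := by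
    intro j
    induction j using Nat.strong_induction_on with
    | _ j ih =>
      intro hjr hjl
      match j, ih with
      | 0, _ => simp
      | 1, _ => exact dist_eq_one_iff_adj.mpr (by simpa using hadj 0 (by omega))
      | k + 2, ih =>
        exact (step (k + 1) (by omega) (by omega) (by omega) (ih (k + 1) (by omega) (by omega)
          (by omega)) (ih k (by omega) (by omega) (by omega))).2 (by omega)
  -- the vertex just past the middle of the cycle is too far from `v` along the first half
  -- and too close along the second half
  by_contra! hlt
  have h3 := hc.three_le_length
  set j := c.length / 2
  have hstep := step j (by omega) (by omega) (by omega) (geodesic j (by omega) (by omega))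
    (geodesic (j - 1) (by omega) (by omega))
  have hback : G.dist v (c.getVert (j + 1)) ≤ c.length - (j + 1) := by
    simpa [dist_comm] using dist_le (c.drop (j + 1))
  have hjr : j < r := by omega
  have := hstep.2 hjr
  omega

theorem egirth_le_two_mul_add_one_of_adj {u' : V} {k : ℕ} (hr : G.Reachable v u)
    (hu : G.dist v u = k) (hu' : G.dist v u' = k) (hadj : G.Adj u u') :
    G.egirth ≤ 2 * k + 1 := by
  classical
  obtain ⟨p, hp, hpl⟩ := hr.exists_path_of_dist
  obtain ⟨q, hq, hql⟩ := (hr.trans hadj.reachable).exists_path_of_dist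
  -- then `q` followed by the edge `u'u` is a second path to `u`, longer than `p`
  have hu_q : u ∉ q.support := by
    intro hmem
    have h1 := dist_le (q.takeUntil u hmem)
    have h2 := congr_arg Walk.length (q.take_spec hmem)
    rw [Walk.length_append] at h2
    exact hadj.ne (Walk.eq_of_length_eq_zero (p := q.dropUntil u hmem) (by omega))
  obtain ⟨_, -, -, c, hc, hcl⟩ :=
    hp.exists_isCycle_length_le_add_of_ne (hq.concat hu_q hadj.symm)
      fun h ↦ by simpa [hpl, hql, hu, hu'] using congr_arg Walk.length h
  calc G.egirth ≤ c.length := egirth_le_length hc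
    _ ≤ 2 * k + 1 := by
      rw [Walk.length_concat] at hcl
      exact_mod_cast (by omega : c.length ≤ 2 * k + 1)

/-- The number of vertices at distance `1, …, r` from a vertex of the infinite `Δ`-regular
tree. -/
def mooreNumber (Δ r : ℕ) : ℕ := Δ * ∑ i ∈ range r, (Δ - 1) ^ i

theorem mooreNumber_eq_div {Δ : ℕ} (hΔ : 3 ≤ Δ) (r : ℕ) :
    Δ * ((Δ - 1) ^ r - 1) / (Δ - 2) = mooreNumber Δ r := by
  have h : Δ - 1 - 1 = Δ - 2 := by omega
  rw [mooreNumber, Nat.geomSum_eq (by omega), h, Nat.mul_div_assoc]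
  simpa [h] using Nat.sub_one_dvd_pow_sub_one (x := Δ - 1) (n := r)

section Spheres

variable [Fintype V] {i r : ℕ}

/-- Since `dist` is `0` between unreachable vertices, spheres and balls are only meaningful
in a connected graph. -/
noncomputable def sphereFinset (G : SimpleGraph V) (v : V) (i : ℕ) : Finset V :=
  {u | G.dist v u = i}

noncomputable def closedBallFinset (G : SimpleGraph V) (v : V) (r : ℕ) : Finset V :=
  {u | G.dist v u ≤ r}

@[simp]
theorem mem_sphereFinset : u ∈ G.sphereFinset v i ↔ G.dist v u = i := by
  simp [sphereFinset]

@[simp]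
theorem mem_closedBallFinset : u ∈ G.closedBallFinset v r ↔ G.dist v u ≤ r := by
  simp [closedBallFinset]

theorem card_closedBallFinset (v : V) (r : ℕ) :
    #(G.closedBallFinset v r) = ∑ i ∈ range (r + 1), #(G.sphereFinset v i) := by
  rw [card_eq_sum_card_fiberwise (f := G.dist v) (t := range (r + 1))
    fun u hu ↦ by
      simp only [coe_range, Set.mem_Iio, mem_coe, mem_closedBallFinset] at hu ⊢
      omega]
  refine sum_congr rfl fun i hi ↦ congr_arg _ ?_
  ext u
  simp only [mem_range] at hi
  simp only [mem_filter, mem_closedBallFinset, mem_sphereFinset]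
  omega

theorem Connected.sphereFinset_zero (hconn : G.Connected) (v : V) : G.sphereFinset v 0 = {v} := by
  ext u
  simp [hconn.dist_eq_zero_iff, eq_comm]

theorem sphereFinset_one [DecidableRel G.Adj] (v : V) :
    G.sphereFinset v 1 = G.neighborFinset v := by
  ext u
  simp

theorem Connected.exists_adj_of_mem_sphereFinset_succ (hconn : G.Connected)
    (hu : u ∈ G.sphereFinset v (i + 1)) : ∃ w ∈ G.sphereFinset v i, G.Adj w u := by
  rw [mem_sphereFinset] at hu
  obtain ⟨w, hw, hwd⟩ := (hconn v u).exists_adj_dist_add_one_eq (by rintro rfl; simp at hu)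
  exact ⟨w, by simp; omega, hw⟩

variable [DecidableRel G.Adj] {Δ : ℕ}

theorem Connected.card_adj_sphereFinset_add_card_adj_sphereFinset_succ_lt_degree
    (hconn : G.Connected) (hi : 1 ≤ i) (hw : w ∈ G.sphereFinset v i) :
    #{y ∈ G.sphereFinset v i | G.Adj w y} + #{y ∈ G.sphereFinset v (i + 1) | G.Adj w y} <
      G.degree w := by
  classical
  obtain ⟨x, hx, hxw⟩ := hconn.exists_adj_of_mem_sphereFinset_succ (i := i - 1)
    (by rwa [Nat.sub_add_cancel hi])
  rw [← card_union_of_disjoint, ← card_neighborFinset_eq_degree]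
  · refine card_lt_card ⟨fun y hy ↦ ?_, fun h ↦ ?_⟩
    · simp only [mem_union, mem_filter] at hy
      exact (G.mem_neighborFinset w y).mpr (hy.elim And.right And.right)
    · have := h ((G.mem_neighborFinset w x).mpr hxw.symm)
      simp only [mem_union, mem_filter, mem_sphereFinset] at this hx
      omega
  · simp only [Finset.disjoint_left, mem_filter, mem_sphereFinset]
    omega

theorem Connected.card_sphereFinset_succ_le_sum (hconn : G.Connected) (v : V) (i : ℕ) :
    #(G.sphereFinset v (i + 1)) ≤
      ∑ w ∈ G.sphereFinset v i, #{y ∈ G.sphereFinset v (i + 1) | G.Adj w y} := by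
  calc #(G.sphereFinset v (i + 1))
      = ∑ x ∈ G.sphereFinset v (i + 1), 1 := card_eq_sum_ones _
    _ ≤ ∑ x ∈ G.sphereFinset v (i + 1), #{w ∈ G.sphereFinset v i | G.Adj w x} :=
        sum_le_sum fun x hx ↦ card_pos.mpr <| by
          obtain ⟨w, hw, hwx⟩ := hconn.exists_adj_of_mem_sphereFinset_succ hx
          exact ⟨w, mem_filter.mpr ⟨hw, hwx⟩⟩
    _ = _ := (sum_card_bipartiteAbove_eq_sum_card_bipartiteBelow _).symm

theorem Connected.card_adj_sphereFinset_succ_le (hconn : G.Connected)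
    (hdeg : ∀ u, G.degree u ≤ Δ) (hi : 1 ≤ i) (hw : w ∈ G.sphereFinset v i) :
    #{y ∈ G.sphereFinset v (i + 1) | G.Adj w y} ≤ Δ - 1 := by
  have := hconn.card_adj_sphereFinset_add_card_adj_sphereFinset_succ_lt_degree hi hw
  have := hdeg w
  omega

theorem Connected.card_sphereFinset_succ_le (hconn : G.Connected) (hdeg : ∀ u, G.degree u ≤ Δ)
    (hi : 1 ≤ i) (v : V) : #(G.sphereFinset v (i + 1)) ≤ (Δ - 1) * #(G.sphereFinset v i) := by
  calc #(G.sphereFinset v (i + 1))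
      ≤ ∑ w ∈ G.sphereFinset v i, #{y ∈ G.sphereFinset v (i + 1) | G.Adj w y} :=
        hconn.card_sphereFinset_succ_le_sum v i
    _ ≤ ∑ w ∈ G.sphereFinset v i, (Δ - 1) :=
        sum_le_sum fun w hw ↦ hconn.card_adj_sphereFinset_succ_le hdeg hi hw
    _ = (Δ - 1) * #(G.sphereFinset v i) := by rw [sum_const, smul_eq_mul, mul_comm]

theorem Connected.card_adj_sphereFinset_succ_eq (hconn : G.Connected)
    (hdeg : ∀ u, G.degree u ≤ Δ) (hi : 1 ≤ i)
    (htight : #(G.sphereFinset v (i + 1)) = (Δ - 1) * #(G.sphereFinset v i))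
    (hw : w ∈ G.sphereFinset v i) : #{y ∈ G.sphereFinset v (i + 1) | G.Adj w y} = Δ - 1 := by
  have hle : ∀ w ∈ G.sphereFinset v i, #{y ∈ G.sphereFinset v (i + 1) | G.Adj w y} ≤ Δ - 1 :=
    fun w hw ↦ hconn.card_adj_sphereFinset_succ_le hdeg hi hw
  refine (sum_eq_sum_iff_of_le hle).mp (le_antisymm (sum_le_sum hle) ?_) w hw
  rw [sum_const, smul_eq_mul, mul_comm, ← htight]
  exact hconn.card_sphereFinset_succ_le_sum v i

theorem Connected.card_adj_sphereFinset_eq_one (hconn : G.Connected)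
    (hdeg : ∀ u, G.degree u ≤ Δ) (hi : 1 ≤ i)
    (htight : #(G.sphereFinset v (i + 1)) = (Δ - 1) * #(G.sphereFinset v i))
    (hx : x ∈ G.sphereFinset v (i + 1)) : #{w ∈ G.sphereFinset v i | G.Adj w x} = 1 := by
  have hpos : ∀ x ∈ G.sphereFinset v (i + 1), 1 ≤ #{w ∈ G.sphereFinset v i | G.Adj w x} :=
    fun x hx ↦ card_pos.mpr <| by
      obtain ⟨w, hw, hwx⟩ := hconn.exists_adj_of_mem_sphereFinset_succ hx
      exact ⟨w, mem_filter.mpr ⟨hw, hwx⟩⟩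
  refine ((sum_eq_sum_iff_of_le hpos).mp
    (le_antisymm (sum_le_sum hpos) (le_of_eq ?_)) x hx).symm
  calc ∑ x ∈ G.sphereFinset v (i + 1), #{w ∈ G.sphereFinset v i | G.Adj w x}
      = ∑ w ∈ G.sphereFinset v i, #{y ∈ G.sphereFinset v (i + 1) | G.Adj w y} :=
        (sum_card_bipartiteAbove_eq_sum_card_bipartiteBelow _).symm
    _ = ∑ w ∈ G.sphereFinset v i, (Δ - 1) :=
        sum_congr rfl fun w hw ↦ hconn.card_adj_sphereFinset_succ_eq hdeg hi htight hw
    _ = ∑ x ∈ G.sphereFinset v (i + 1), 1 := by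
        rw [sum_const, sum_const, smul_eq_mul, smul_eq_mul, mul_one, htight, mul_comm]

theorem Connected.card_sphereFinset_succ_le_mul_pow (hconn : G.Connected)
    (hdeg : ∀ u, G.degree u ≤ Δ) (v : V) : ∀ i, #(G.sphereFinset v (i + 1)) ≤ Δ * (Δ - 1) ^ i
  | 0 => by simpa [sphereFinset_one] using hdeg v
  | i + 1 =>
    calc #(G.sphereFinset v (i + 2)) ≤ (Δ - 1) * #(G.sphereFinset v (i + 1)) :=
          hconn.card_sphereFinset_succ_le hdeg (by omega) v
      _ ≤ (Δ - 1) * (Δ * (Δ - 1) ^ i) :=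
          Nat.mul_le_mul_left _ (hconn.card_sphereFinset_succ_le_mul_pow hdeg v i)
      _ = Δ * (Δ - 1) ^ (i + 1) := by ring

theorem Connected.card_closedBallFinset_le (hconn : G.Connected) (hdeg : ∀ u, G.degree u ≤ Δ)
    (v : V) (r : ℕ) : #(G.closedBallFinset v r) ≤ 1 + mooreNumber Δ r := by
  rw [card_closedBallFinset, sum_range_succ', hconn.sphereFinset_zero, card_singleton, add_comm,
    mooreNumber, mul_sum]
  gcongr with i
  exact hconn.card_sphereFinset_succ_le_mul_pow hdeg v i

theorem Connected.card_sphereFinset_succ_eq_of_card_closedBallFinset_eq (hconn : G.Connected)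
    (hdeg : ∀ u, G.degree u ≤ Δ) (hfull : #(G.closedBallFinset v r) = 1 + mooreNumber Δ r)
    (hi : i < r) : #(G.sphereFinset v (i + 1)) = Δ * (Δ - 1) ^ i := by
  rw [card_closedBallFinset, sum_range_succ', hconn.sphereFinset_zero, card_singleton, add_comm,
    mooreNumber, mul_sum, add_left_cancel_iff] at hfull
  exact (sum_eq_sum_iff_of_le fun i _ ↦ hconn.card_sphereFinset_succ_le_mul_pow hdeg v i).mp
    hfull i (mem_range.mpr hi)

theorem Connected.card_sphereFinset_succ_eq_mul_of_card_closedBallFinset_eq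
    (hconn : G.Connected) (hdeg : ∀ u, G.degree u ≤ Δ)
    (hfull : #(G.closedBallFinset v r) = 1 + mooreNumber Δ r) (hi : 1 ≤ i) (hir : i < r) :
    #(G.sphereFinset v (i + 1)) = (Δ - 1) * #(G.sphereFinset v i) := by
  obtain ⟨j, rfl⟩ : ∃ j, i = j + 1 := ⟨i - 1, by omega⟩
  rw [hconn.card_sphereFinset_succ_eq_of_card_closedBallFinset_eq hdeg hfull hir,
    hconn.card_sphereFinset_succ_eq_of_card_closedBallFinset_eq hdeg hfull (by omega)]
  ring

theorem Connected.isTreeLikeAt_of_card_closedBallFinset_eq (hconn : G.Connected)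
    (hdeg : ∀ u, G.degree u ≤ Δ) (hfull : #(G.closedBallFinset v r) = 1 + mooreNumber Δ r) :
    G.IsTreeLikeAt v r where
  eq_of_adj_of_dist_add_one_eq w x y hw hx hy hxd hyd := by
    obtain ⟨i, hi⟩ : ∃ i, G.dist v w = i + 1 := ⟨G.dist v w - 1, by omega⟩
    rcases Nat.eq_zero_or_pos i with rfl | hi1
    · rw [← hconn.dist_eq_zero_iff.mp (by omega : G.dist v x = 0),
        hconn.dist_eq_zero_iff.mp (by omega : G.dist v y = 0)]
    · have hone := hconn.card_adj_sphereFinset_eq_one hdeg hi1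
        (hconn.card_sphereFinset_succ_eq_mul_of_card_closedBallFinset_eq hdeg hfull hi1
          (by omega))
        (mem_sphereFinset.mpr hi)
      exact card_le_one.mp hone.le x (by simp [hx]; omega) y (by simp [hy]; omega)
  dist_ne_of_adj w y hw hy heq := by
    rcases Nat.eq_zero_or_pos (G.dist v w) with h0 | hpos
    · obtain rfl := hconn.dist_eq_zero_iff.mp h0
      simp [dist_eq_one_iff_adj.mpr hy] at heq
    · have hw' : w ∈ G.sphereFinset v (G.dist v w) := mem_sphereFinset.mpr rfl
      have hup := hconn.card_adj_sphereFinset_succ_eq hdeg hpos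
        (hconn.card_sphereFinset_succ_eq_mul_of_card_closedBallFinset_eq hdeg hfull hpos hw) hw'
      have hlt := hconn.card_adj_sphereFinset_add_card_adj_sphereFinset_succ_lt_degree hpos hw'
      have hsame : 0 < #{y ∈ G.sphereFinset v (G.dist v w) | G.Adj w y} :=
        card_pos.mpr ⟨y, by simp [heq, hy]⟩
      have := hdeg w
      omega

theorem IsTreeLikeAt.exists_adj_dist_eq (h : G.IsTreeLikeAt v r) (hu : G.dist v u = r)
    (hfar : ∀ y, G.dist v y ≤ r) (hdeg : 1 < G.degree u) :
    ∃ u', G.Adj u u' ∧ G.dist v u' = r := by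
  by_contra! hnone
  have hparent : ∀ y, G.Adj y u → G.dist v y + 1 = G.dist v u := fun y hy ↦ by
    have := hy.diff_dist_adj (u := v)
    have := hfar y
    have := hnone y hy.symm
    omega
  have : #(G.neighborFinset u) ≤ 1 := card_le_one.mpr fun x hx y hy ↦ by
    rw [mem_neighborFinset] at hx hy
    exact h.eq_of_adj_of_dist_add_one_eq hu.le hx.symm hy.symm (hparent x hx.symm)
      (hparent y hy.symm)
  rw [card_neighborFinset_eq_degree] at this
  omega

end Spheres

section Merge

variable [DecidableEq V] {H : SimpleGraph V} {a b : V}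

theorem Colorable.of_map_update {k : ℕ} (hnab : ¬H.Adj a b)
    (hcol : (H.map (Function.update id b a)).Colorable k) : H.Colorable k := by
  refine hcol.of_hom ⟨Function.update id b a, fun {x y} hxy ↦ map_adj_apply' hxy ?_⟩
  have hx : x = b → y ≠ a := fun hx hy ↦ hnab (hx ▸ hy ▸ hxy.symm)
  have hy : y = b → x ≠ a := fun hy hx ↦ hnab (hx ▸ hy ▸ hxy)
  simp only [Function.update_apply, id_eq]
  split_ifs <;> grind [hxy.ne]

theorem ne_of_map_update_adj (hab : a ≠ b) (h : (H.map (Function.update id b a)).Adj x y) :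
    y ≠ b := by
  obtain ⟨-, -, y', -, -, rfl⟩ := h
  by_cases hy' : y' = b
  · simpa [hy'] using hab
  · simpa [Function.update_of_ne hy'] using hy'

theorem neighborFinset_map_update_subset [Fintype V] [DecidableRel H.Adj] (hxa : x ≠ a)
    (hxb : x ≠ b) : (H.map (Function.update id b a)).neighborFinset x ⊆
      (H.neighborFinset x).image (Function.update id b a) := by
  intro y hy
  obtain ⟨-, x', y', hxy', hx', rfl⟩ := (mem_neighborFinset _ _ _).mp hy
  obtain rfl : x' = x := by
    by_cases hx'b : x' = b
    · simp only [hx'b, Function.update_self] at hx'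
      exact absurd hx'.symm hxa
    · simpa [Function.update_of_ne hx'b] using hx'
  exact mem_image_of_mem _ ((mem_neighborFinset _ _ _).mpr hxy')

end Merge

section Coloring

variable [Fintype V] {H : SimpleGraph V} [DecidableRel H.Adj] {k : ℕ}

/-- Greedy colouring in increasing order of `r`: the least colour below `k` not used by an
earlier neighbour (`sInf ∅ = 0` if there is none). -/
noncomputable def greedyColor (H : SimpleGraph V) (r : V → ℕ) (k : ℕ) (v : V) : ℕ :=
  sInf {m | m < k ∧ ∀ u, H.Adj v u → r u < r v → greedyColor H r k u ≠ m}
termination_by r v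
decreasing_by assumption

theorem greedyColor_spec (r : V → ℕ) (hv : #{u ∈ H.neighborFinset v | r u < r v} < k) :
    greedyColor H r k v < k ∧
      ∀ u, H.Adj v u → r u < r v → greedyColor H r k u ≠ greedyColor H r k v := by
  classical
  set earlier := {u ∈ H.neighborFinset v | r u < r v}
  have hfree : (range k \ earlier.image (greedyColor H r k)).Nonempty := by
    rw [← card_pos]
    have := card_image_le (s := earlier) (f := greedyColor H r k)
    have := le_card_sdiff (earlier.image (greedyColor H r k)) (range k)
    rw [card_range] at this
    omega
  obtain ⟨m, hm⟩ := hfree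
  simp only [earlier, mem_sdiff, mem_range, mem_image, mem_filter, mem_neighborFinset,
    not_exists, not_and] at hm
  have hmem := Nat.sInf_mem (s := {m | m < k ∧ ∀ u, H.Adj v u → r u < r v →
    greedyColor H r k u ≠ m}) ⟨m, hm.1, fun u hu hr ↦ hm.2 u ⟨hu, hr⟩⟩
  rwa [← greedyColor] at hmem

theorem colorable_of_card_neighbor_lt_of_injective (r : V → ℕ) (hr : Function.Injective r)
    (hk : ∀ v, #{u ∈ H.neighborFinset v | r u < r v} < k) : H.Colorable k := by
  refine ⟨Coloring.mk (fun v ↦ ⟨greedyColor H r k v, (greedyColor_spec r (hk v)).1⟩) ?_⟩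
  intro a b hab heq
  have heq' : greedyColor H r k a = greedyColor H r k b := congr_arg Fin.val heq
  rcases lt_or_gt_of_ne (hr.ne hab.ne) with h | h
  · exact (greedyColor_spec r (hk b)).2 a hab.symm h heq'
  · exact (greedyColor_spec r (hk a)).2 b hab h heq'.symm

theorem colorable_of_card_neighbor_le_lt (h : V → ℕ)
    (hk : ∀ v, #{u ∈ H.neighborFinset v | h v ≤ h u} < k) : H.Colorable k := by
  classical
  set n := Fintype.card V
  set e := Fintype.equivFin V
  -- higher vertices come first, ties are broken by `e`
  set r : V → ℕ := fun v ↦ n * #{u | h v < h u} + e v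
  refine colorable_of_card_neighbor_lt_of_injective r (fun a b hab ↦ ?_)
    fun v ↦ (card_le_card fun u hu ↦ ?_).trans_lt (hk v)
  · have := congr_arg (· % n) hab
    simp only [r, Nat.mul_add_mod] at this
    rw [Nat.mod_eq_of_lt (e a).2, Nat.mod_eq_of_lt (e b).2] at this
    exact e.injective (Fin.ext this)
  · simp only [mem_filter] at hu ⊢
    refine ⟨hu.1, not_lt.mp fun hlt ↦ hu.2.not_ge ?_⟩
    have hcard : #{w | h v < h w} + 1 ≤ #{w | h u < h w} :=
      card_lt_card ⟨fun w hw ↦ by simp at hw ⊢; omega, fun hsub ↦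
        lt_irrefl (h v) (mem_filter.mp (hsub (mem_filter.mpr ⟨mem_univ v, hlt⟩))).2⟩
    have := (e v).2
    refine le_of_lt ?_
    calc r v < n * (#{w | h v < h w} + 1) := by
          simp only [r]
          rw [mul_add, mul_one]
          omega
      _ ≤ n * #{w | h u < h w} := Nat.mul_le_mul_left n hcard
      _ ≤ r u := Nat.le_add_right _ _

theorem Connected.colorable_of_degree_lt (hH : H.Connected) (hdeg : ∀ v, H.degree v ≤ k)
    {v₀ : V} (hv₀ : H.degree v₀ < k) : H.Colorable k := by
  refine colorable_of_card_neighbor_le_lt (H.dist v₀) fun v ↦ ?_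
  rcases eq_or_ne v₀ v with rfl | hne
  · exact (card_filter_le _ _).trans_lt (by rwa [card_neighborFinset_eq_degree])
  · obtain ⟨w, hw, hwd⟩ := (hH v₀ v).exists_adj_dist_add_one_eq hne
    calc _ < #(H.neighborFinset v) :=
          card_lt_card (filter_ssubset.mpr ⟨w, by simpa using hw.symm, by omega⟩)
      _ ≤ k := (card_neighborFinset_eq_degree H v).trans_le (hdeg v)

/-- Lovász's step in the proof of Brooks' theorem: colour `a` and `b` alike first, then the other
vertices in decreasing order of `h`. Every vertex but `c` has a neighbour coloured after it, and
`c` sees a single colour on `a` and `b`. -/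
theorem colorable_of_adj_of_adj_of_not_adj (hdeg : ∀ v, H.degree v ≤ k) {a b c : V}
    (hab : a ≠ b) (hnab : ¬H.Adj a b) (hca : H.Adj c a) (hcb : H.Adj c b) (h : V → ℕ)
    (hdesc : ∀ x, x ≠ a → x ≠ b → x ≠ c → ∃ y, H.Adj x y ∧ y ≠ a ∧ y ≠ b ∧ h y < h x) :
    H.Colorable k := by
  classical
  refine Colorable.of_map_update hnab ?_
  set f := Function.update id b a
  set H' := H.map f
  have hf : ∀ x, x ≠ b → f x = x := fun x hx ↦ Function.update_of_ne hx _ _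
  have hcpos : 0 < H.degree c := (H.degree_pos_iff_exists_adj c).mpr ⟨a, hca⟩
  set h' : V → ℕ := fun x ↦ if x = a ∨ x = b then univ.sup h + 1 else h x
  refine colorable_of_card_neighbor_le_lt h' fun x ↦ ?_
  by_cases hxab : x = a ∨ x = b
  · refine lt_of_eq_of_lt (card_eq_zero.mpr (filter_eq_empty_iff.mpr fun y hy ↦ ?_))
      (hcpos.trans_le (hdeg c))
    rw [mem_neighborFinset] at hy
    have hyb := ne_of_map_update_adj hab hy
    have hya : y ≠ a := fun hya ↦
      ne_of_map_update_adj hab hy.symm (hxab.resolve_left (hya ▸ hy.ne))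
    simp only [h', if_pos hxab, if_neg (not_or.mpr ⟨hya, hyb⟩), not_le]
    exact Nat.lt_succ_of_le (le_sup (mem_univ _))
  obtain ⟨hxa, hxb⟩ := not_or.mp hxab
  have hcard := (card_le_card (neighborFinset_map_update_subset (H := H) hxa hxb)).trans
    card_image_le
  rw [H.card_neighborFinset_eq_degree x] at hcard
  by_cases hxc : x = c
  · subst hxc
    have hlt : #((H.neighborFinset x).image f) < H.degree x := by
      rw [← card_neighborFinset_eq_degree]
      refine card_image_le.lt_of_ne fun himg ↦ hab (card_image_iff.mp himg (by simpa using hca)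
        (by simpa using hcb) ?_)
      simp [f, hab]
    exact (card_filter_le _ _).trans_lt <|
      ((card_le_card (neighborFinset_map_update_subset hxa hxb)).trans_lt hlt).trans_le (hdeg x)
  · obtain ⟨y, hxy, hya, hyb, hyx⟩ := hdesc x hxa hxb hxc
    have hy : y ∈ H'.neighborFinset x :=
      (H'.mem_neighborFinset x y).mpr ⟨hxy.ne, x, y, hxy, hf x hxb, hf y hyb⟩
    calc _ < #(H'.neighborFinset x) := card_lt_card (filter_ssubset.mpr
          ⟨y, hy, by simp only [h', if_neg hxab, if_neg (not_or.mpr ⟨hya, hyb⟩)]; omega⟩)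
      _ ≤ k := hcard.trans (hdeg x)

end Coloring

section Power

variable {γ k : ℕ}

theorem Connected.power_adj_iff (hconn : G.Connected) :
    (G.power γ).Adj u w ↔ u ≠ w ∧ G.dist u w ≤ γ :=
  ⟨fun h ↦ ⟨h.1, h.2.2⟩, fun h ↦ ⟨h.1, hconn u w, h.2⟩⟩

theorem Adj.power_adj (h : G.Adj u w) (hγ : 1 ≤ γ) : (G.power γ).Adj u w :=
  ⟨h.ne, h.reachable, by rwa [dist_eq_one_iff_adj.mpr h]⟩

theorem Connected.power (hconn : G.Connected) (hγ : 1 ≤ γ) : (G.power γ).Connected :=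
  hconn.mono fun _ _ h ↦ h.power_adj hγ

variable [Fintype V]

theorem Connected.degree_power (hconn : G.Connected) (v : V) :
    (G.power γ).degree v = #(G.closedBallFinset v γ) - 1 := by
  classical
  rw [← card_neighborFinset_eq_degree,
    ← card_erase_of_mem (mem_closedBallFinset.mpr (by simp : G.dist v v ≤ γ))]
  congr 1
  ext u
  simp [hconn.power_adj_iff, ne_comm]

theorem Connected.power_colorable_of_dist_eq_add_one (hconn : G.Connected) (hγ : 2 ≤ γ)
    (hdeg : ∀ v, (G.power γ).degree v ≤ k) {a b : V} (hab : G.dist a b = γ + 1) :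
    (G.power γ).Colorable k := by
  have hne : ∀ {x y}, G.dist x y ≠ 0 → x ≠ y := by rintro x y h rfl; simp at h
  have hGab : ¬G.Adj a b := fun h ↦ by rw [← dist_eq_one_iff_adj] at h; omega
  have hba : G.dist b a = γ + 1 := dist_comm.trans hab
  obtain ⟨c, hca, hcb⟩ := (hconn b a).exists_adj_dist_add_one_eq (hne (by omega))
  replace hcb : G.dist c b = γ := by rw [dist_comm]; omega
  have hab' : a ≠ b := hne (x := a) (y := b) (by omega)
  have hcb' : c ≠ b := hne (x := c) (y := b) (by omega)
  refine colorable_of_adj_of_adj_of_not_adj hdeg hab'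
    (fun h ↦ by have := (hconn.power_adj_iff.mp h).2; omega) (hca.power_adj (by omega))
    (hconn.power_adj_iff.mpr ⟨hcb', by omega⟩) (G.dist c) fun x hxa hxb hxc ↦ ?_
  obtain ⟨y, hyx, hy⟩ := (hconn c x).exists_adj_dist_add_one_eq (Ne.symm hxc)
  by_cases hyab : y = a ∨ y = b
  · -- skip the removed vertex `y`: `G`-distance two is adjacency in `G ^ γ`
    have hyc : c ≠ y := by rcases hyab with rfl | rfl; exacts [hca.ne, hcb']
    obtain ⟨z, hzy, hz⟩ := (hconn c y).exists_adj_dist_add_one_eq hyc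
    have hxz : G.dist x z ≤ 2 := by
      have := hconn.dist_triangle (u := x) (v := y) (w := z)
      rw [dist_eq_one_iff_adj.mpr hyx.symm, dist_eq_one_iff_adj.mpr hzy.symm] at this
      exact this
    refine ⟨z, hconn.power_adj_iff.mpr ⟨fun h ↦ by subst h; omega, by omega⟩, ?_, ?_, by omega⟩
    · rintro rfl; rcases hyab with rfl | rfl; exacts [hzy.ne rfl, hGab hzy]
    · rintro rfl; rcases hyab with rfl | rfl; exacts [hGab hzy.symm, hzy.ne rfl]
  · push Not at hyab
    exact ⟨y, hyx.symm.power_adj (by omega), hyab.1, hyab.2, by omega⟩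

variable [DecidableRel G.Adj] {Δ : ℕ}

theorem Connected.card_closedBallFinset_eq_of_not_colorable (hconn : G.Connected) (hγ : 1 ≤ γ)
    (hdeg : ∀ u, G.degree u ≤ Δ) (hnot : ¬(G.power γ).Colorable (mooreNumber Δ γ)) (v : V) :
    #(G.closedBallFinset v γ) = 1 + mooreNumber Δ γ := by
  refine (hconn.card_closedBallFinset_le hdeg v γ).antisymm (not_lt.mp fun hlt ↦ hnot ?_)
  have hdegH : ∀ u, (G.power γ).degree u ≤ mooreNumber Δ γ := fun u ↦ by
    rw [hconn.degree_power]
    have := hconn.card_closedBallFinset_le hdeg u γ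
    omega
  have hv : 0 < #(G.closedBallFinset v γ) := card_pos.mpr ⟨v, by simp⟩
  exact (hconn.power hγ).colorable_of_degree_lt hdegH (v₀ := v)
    (by rw [hconn.degree_power]; omega)

theorem Connected.card_eq_of_not_colorable (hconn : G.Connected) (hγ : 2 ≤ γ)
    (hdeg : ∀ u, G.degree u ≤ Δ) (hnot : ¬(G.power γ).Colorable (mooreNumber Δ γ)) :
    Fintype.card V = 1 + mooreNumber Δ γ := by
  have hfull := hconn.card_closedBallFinset_eq_of_not_colorable (by omega) hdeg hnot
  refine le_antisymm (not_lt.mp fun hlt ↦ hnot ?_)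
    (not_lt.mp fun hlt ↦ hnot ((G.power γ).colorable_of_fintype.mono (by omega)))
  obtain ⟨v⟩ := hconn.nonempty
  obtain ⟨z, -, hz⟩ := exists_mem_notMem_of_card_lt_card (s := G.closedBallFinset v γ)
    (t := univ) (by rwa [card_univ, hfull])
  obtain ⟨b, hb⟩ := hconn.exists_dist_eq_of_le (v := v) (u := z) (k := γ + 1)
    (by simp at hz; omega)
  exact hconn.power_colorable_of_dist_eq_add_one hγ
    (fun u ↦ by rw [hconn.degree_power, hfull u]; simp) hb

end Power

end SimpleGraph

open SimpleGraph

theorem moore_of_chromaticNumber_eq_general {V : Type*} [Fintype V] (G : SimpleGraph V)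
    [DecidableRel G.Adj] (hconn : G.Connected) (Δ γ : ℕ)
    (hΔ : G.maxDegree = Δ) (h3 : 3 ≤ Δ) (hγ : 2 ≤ γ)
    (heq : (G.power γ).chromaticNumber =
      ((Δ * ((Δ - 1) ^ γ - 1) / (Δ - 2) + 1 : ℕ) : ℕ∞)) :
    G.IsRegularOfDegree Δ ∧ Fintype.card V = Δ * ((Δ - 1) ^ γ - 1) / (Δ - 2) + 1 ∧
      G.egirth = ((2 * γ + 1 : ℕ) : ℕ∞) ∧ G.ediam = (γ : ℕ∞) := by
  have hdeg : ∀ v, G.degree v ≤ Δ := fun v ↦ hΔ ▸ G.degree_le_maxDegree v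
  rw [mooreNumber_eq_div h3] at heq ⊢
  have hnot : ¬(G.power γ).Colorable (mooreNumber Δ γ) := fun hcol ↦ by
    have := heq ▸ hcol.chromaticNumber_le
    norm_cast at this
    omega
  have hfull := hconn.card_closedBallFinset_eq_of_not_colorable (by omega) hdeg hnot
  have hcard := hconn.card_eq_of_not_colorable hγ hdeg hnot
  have htree v := hconn.isTreeLikeAt_of_card_closedBallFinset_eq hdeg (hfull v)
  have hsphere v i (hi : i < γ) :=
    hconn.card_sphereFinset_succ_eq_of_card_closedBallFinset_eq hdeg (hfull v) hi
  have hdist u v : G.dist u v ≤ γ := mem_closedBallFinset.mp <|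
    (eq_univ_of_card _ ((hfull u).trans hcard.symm)).symm ▸ mem_univ v
  have hreg : G.IsRegularOfDegree Δ := fun v ↦ by
    simpa [sphereFinset_one] using hsphere v 0 (by omega)
  obtain ⟨v⟩ := hconn.nonempty
  obtain ⟨u, hu⟩ : (G.sphereFinset v γ).Nonempty := by
    have := hsphere v (γ - 1) (by omega)
    rw [Nat.sub_add_cancel (by omega)] at this
    exact card_pos.mp (this ▸ Nat.mul_pos (by omega) (pow_pos (by omega) _))
  rw [mem_sphereFinset] at hu
  obtain ⟨u', huu', hu'⟩ := (htree v).exists_adj_dist_eq hu (hdist v) (by rw [hreg u]; omega)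
  refine ⟨hreg, by omega, le_antisymm ?_ ?_, le_antisymm ?_ ?_⟩
  · exact_mod_cast egirth_le_two_mul_add_one_of_adj (hconn v u) hu hu' huu'
  · exact le_egirth.mpr fun a c hc ↦ by exact_mod_cast (htree a).le_length_of_isCycle hc
  · exact ediam_le_of_edist_le fun x y ↦ by
      rw [← (hconn x y).coe_dist_eq_edist]
      exact_mod_cast hdist x y
  · calc (γ : ℕ∞) = G.edist v u := by rw [← (hconn v u).coe_dist_eq_edist, hu]
      _ ≤ G.ediam := edist_le_ediam

/-- If χ_γ(G) attains the maximum value M+1, then G is a Moore graph: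
Δ-regular of order M+1, with girth 2γ+1 and diameter γ. -/
theorem moore_of_chromaticNumber_eq {V : Type*} [Fintype V] [DecidableEq V] (G : SimpleGraph V)
    [DecidableRel G.Adj] (hconn : G.Connected) (Δ γ : ℕ)
    (hΔ : G.maxDegree = Δ) (h3 : 3 ≤ Δ) (hγ : 2 ≤ γ)
    (heq : (G.power γ).chromaticNumber =
      ((Δ * ((Δ - 1) ^ γ - 1) / (Δ - 2) + 1 : ℕ) : ℕ∞)) :
    G.IsRegularOfDegree Δ ∧ Fintype.card V = Δ * ((Δ - 1) ^ γ - 1) / (Δ - 2) + 1 ∧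
      G.egirth = ((2 * γ + 1 : ℕ) : ℕ∞) ∧ G.ediam = (γ : ℕ∞) :=
  moore_of_chromaticNumber_eq_general G hconn Δ γ hΔ h3 hγ heq
end

section
/- Let G be a connected graph on at least 3 vertices. Then entrywise A(G²) ≤ A(G)² − L(G), where A denotes adjacency matrix and L = D − A is the Laplacian matrix; moreover equality holds if and only if the girth of G is at least 5. -/
theorem ite_or_pos_le_add_ite {R : Type*} [Ring R] [LinearOrder R] [IsStrictOrderedRing R]
    (p : Prop) [Decidable p] (c : ℕ) :
    (if p ∨ 0 < c then 1 else 0 : R) ≤ c + if p then 1 else 0 := by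
  by_cases hp : p <;> rcases c with _ | c <;> simp [hp]
  positivity

theorem ite_or_pos_eq_add_ite_iff {R : Type*} [Ring R] [LinearOrder R] [IsStrictOrderedRing R]
    (p : Prop) [Decidable p] (c : ℕ) :
    (if p ∨ 0 < c then 1 else 0 : R) = c + (if p then 1 else 0) ↔ (p → c = 0) ∧ c ≤ 1 := by
  by_cases hp : p <;> rcases c with _ | c <;> simp [hp, Nat.cast_add_one_ne_zero]

namespace SimpleGraph

variable {V : Type*} (G : SimpleGraph V)

theorem reachable_and_dist_le_iff {u v : V} {n : ℕ} :
    G.Reachable u v ∧ G.dist u v ≤ n ↔ G.edist u v ≤ n := by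
  by_cases hr : G.Reachable u v
  · simp [hr, ← hr.coe_dist_eq_edist]
  · simp [hr, edist_eq_top_of_not_reachable hr]

theorem power_two_adj_iff {u v : V} :
    (G.power 2).Adj u v ↔ u ≠ v ∧ (G.Adj u v ∨ (G.commonNeighbors u v).Nonempty) := by
  change u ≠ v ∧ G.Reachable u v ∧ G.dist u v ≤ 2 ↔ _
  rw [reachable_and_dist_le_iff, Nat.cast_ofNat, ← not_lt, two_lt_edist_iff,
    Set.nonempty_iff_ne_empty]
  tauto

theorem exists_isCycle_length_three_iff :
    (∃ (u : V) (w : G.Walk u u), w.IsCycle ∧ w.length = 3) ↔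
      ∃ u v, G.Adj u v ∧ (G.commonNeighbors u v).Nonempty := by
  classical
  rw [← is3Clique_iff_exists_cycle_length_three]
  simp only [is3Clique_iff, Set.Nonempty, mem_commonNeighbors]
  constructor
  · rintro ⟨_, a, b, c, hab, hac, hbc, -⟩
    exact ⟨a, b, hab, c, hac, hbc⟩
  · rintro ⟨a, b, hab, c, hac, hbc⟩
    exact ⟨_, a, b, c, hab, hac, hbc, rfl⟩

theorem exists_isCycle_length_four_iff :
    (∃ (u : V) (w : G.Walk u u), w.IsCycle ∧ w.length = 4) ↔
      ∃ u v, u ≠ v ∧ ¬(G.commonNeighbors u v).Subsingleton := by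
  simp only [Set.Subsingleton, mem_commonNeighbors]
  constructor
  · rintro ⟨_, w, hw, hl⟩
    match w, hw, hl with
    | .cons hab (.cons hbc (.cons hcd (.cons hda .nil))), hw, _ =>
      have hs := hw.support_nodup
      simp only [Walk.support_cons, Walk.support_nil, List.tail_cons, List.nodup_cons,
        List.mem_cons, List.not_mem_nil, List.nodup_nil, or_false, and_true, not_or] at hs
      obtain ⟨⟨-, hbd, -⟩, ⟨-, hca⟩, -⟩ := hs
      exact ⟨_, _, Ne.symm hca, fun h ↦ hbd (h ⟨hab, hbc.symm⟩ ⟨hda.symm, hcd⟩)⟩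
  · rintro ⟨a, c, hac, hcn⟩
    push Not at hcn
    obtain ⟨b, ⟨hab, hcb⟩, d, ⟨had, hcd⟩, hbd⟩ := hcn
    refine ⟨a, .cons hab (.cons hcb.symm (.cons hcd (.cons had.symm .nil))),
      (Walk.isCycle_def _).mpr ⟨⟨?_⟩, by simp, ?_⟩, rfl⟩
    all_goals simp [hab.ne', hcb.ne', hcd.ne, had.ne', hac, hac.symm, hbd]

theorem five_le_egirth_iff :
    5 ≤ G.egirth ↔ ∀ u v, (G.Adj u v → G.commonNeighbors u v = ∅) ∧
      (u ≠ v → (G.commonNeighbors u v).Subsingleton) := by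
  have hcycle : 5 ≤ G.egirth ↔
      (¬∃ (u : V) (w : G.Walk u u), w.IsCycle ∧ w.length = 3) ∧
        ¬∃ (u : V) (w : G.Walk u u), w.IsCycle ∧ w.length = 4 := by
    simp only [le_egirth, not_exists, not_and, ← forall_and]
    refine forall₂_congr fun u w ↦ ⟨fun h hw ↦ ?_, fun h hw ↦ ?_⟩
    · have := h hw
      norm_cast at this
      omega
    · have := hw.three_le_length
      have := h hw
      norm_cast
      omega
  rw [hcycle, exists_isCycle_length_three_iff, exists_isCycle_length_four_iff]
  simp only [not_exists, not_and, not_not, Set.not_nonempty_iff_eq_empty, forall_and]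

section Matrix

variable {R : Type*} [Fintype V] [DecidableEq V] [DecidableRel G.Adj]

theorem adjMatrix_sq_apply [Semiring R] (i j : V) :
    (G.adjMatrix R ^ 2) i j = Fintype.card (G.commonNeighbors i j) := by
  rw [adjMatrix_pow_apply_eq_card_walk]
  exact congrArg _ (Fintype.card_congr (G.walkLengthTwoEquivCommonNeighbors i j))

theorem adjMatrix_sq_sub_lapMatrix_apply [Ring R] (i j : V) :
    (G.adjMatrix R ^ 2 - G.lapMatrix R) i j =
      if i = j then 0
      else (Fintype.card (G.commonNeighbors i j) : R) + if G.Adj i j then 1 else 0 := by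
  rcases eq_or_ne i j with rfl | hij
  · have : Fintype.card (G.commonNeighbors i i) = G.degree i := by
      rw [← card_neighborSet_eq_degree]
      exact Fintype.card_congr (.setCongr (by simp [commonNeighbors_eq]))
    simp [adjMatrix_sq_apply, lapMatrix, degMatrix, this]
  · simp [adjMatrix_sq_apply, lapMatrix, degMatrix, hij]

theorem adjMatrix_power_two_apply [Zero R] [One R] (i j : V) :
    (G.power 2).adjMatrix R i j =
      if i = j then 0
      else if G.Adj i j ∨ 0 < Fintype.card (G.commonNeighbors i j) then 1 else 0 := by
  by_cases hij : i = j
  · simp [hij]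
  · rw [adjMatrix_apply, if_neg hij]
    refine if_congr ?_ rfl rfl
    rw [power_two_adj_iff, Fintype.card_pos_iff, Set.nonempty_coe_sort]
    simp [hij]

variable [Ring R] [LinearOrder R] [IsStrictOrderedRing R]

theorem adjMatrix_power_two_apply_le (i j : V) :
    (G.power 2).adjMatrix R i j ≤ (G.adjMatrix R ^ 2 - G.lapMatrix R) i j := by
  rw [adjMatrix_power_two_apply, adjMatrix_sq_sub_lapMatrix_apply]
  by_cases hij : i = j
  · simp [hij]
  · simpa only [if_neg hij] using ite_or_pos_le_add_ite _ _

theorem adjMatrix_power_two_apply_eq_iff (i j : V) :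
    (G.power 2).adjMatrix R i j = (G.adjMatrix R ^ 2 - G.lapMatrix R) i j ↔
      (G.Adj i j → G.commonNeighbors i j = ∅) ∧ (i ≠ j → (G.commonNeighbors i j).Subsingleton) := by
  rw [adjMatrix_power_two_apply, adjMatrix_sq_sub_lapMatrix_apply]
  by_cases hij : i = j
  · simp [hij]
  · rw [if_neg hij, if_neg hij, ite_or_pos_eq_add_ite_iff, ← Set.isEmpty_coe_sort,
      ← Fintype.card_eq_zero_iff, ← Set.subsingleton_coe, ← Fintype.card_le_one_iff_subsingleton]
    simp [hij]

end Matrix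

end SimpleGraph

theorem adjMatrix_square_le_general {V : Type*} [Fintype V] [DecidableEq V]
    (G : SimpleGraph V) [DecidableRel G.Adj] :
    (∀ i j, (G.power 2).adjMatrix ℝ i j ≤ ((G.adjMatrix ℝ) ^ 2 - G.lapMatrix ℝ) i j) ∧
    ((∀ i j, (G.power 2).adjMatrix ℝ i j = ((G.adjMatrix ℝ) ^ 2 - G.lapMatrix ℝ) i j) ↔
      5 ≤ G.egirth) := by
  refine ⟨G.adjMatrix_power_two_apply_le, ?_⟩
  simp only [G.adjMatrix_power_two_apply_eq_iff, G.five_le_egirth_iff]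

/-- A(G²) ≤ A(G)² - L(G) entrywise, with equality iff the girth of G is at least 5. -/
theorem adjMatrix_square_le {V : Type*} [Fintype V] [DecidableEq V]
    (G : SimpleGraph V) [DecidableRel G.Adj] (hconn : G.Connected)
    (h3 : 3 ≤ Fintype.card V) :
    (∀ i j, (G.power 2).adjMatrix ℝ i j ≤ ((G.adjMatrix ℝ) ^ 2 - G.lapMatrix ℝ) i j) ∧
    ((∀ i j, (G.power 2).adjMatrix ℝ i j = ((G.adjMatrix ℝ) ^ 2 - G.lapMatrix ℝ) i j) ↔
      5 ≤ G.egirth) :=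
  adjMatrix_square_le_general G
end

section
/- Let G be a connected graph on at least 3 vertices and γ ≥ 3 an integer. Then λ₁(G^γ) < λ₁(G^{γ-1})·λ₁(G), and consequently λ₁(G^γ) < λ₁(G)^γ. -/
open Classical in
/-- The largest eigenvalue of the adjacency matrix of a finite graph. -/
noncomputable def lam1 {V : Type*} [Fintype V] (G : SimpleGraph V) : ℝ :=
  sSup (spectrum ℝ (G.adjMatrix ℝ))

/-!
Write `P`, `Q`, `A`, `D` for the adjacency matrices of `G^(k+1)`, `G^k`, `G` and the degree
matrix of `G`. A pair at distance between `2` and `k + 1` is joined by a `G^k`-step followed by a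
`G`-step, and for `k ≥ 1` the diagonal of `QA` is the degree vector; hence `P + D ≤ QA + A`
entrywise. Since `D - A` is the Laplacian, a nonnegative unit vector `x` with
`λ₁(G^(k+1)) ≤ xᵀPx` (the modulus of a top eigenvector) satisfies
`xᵀPx ≤ xᵀQAx = ⟪Qx, Ax⟫ ≤ ‖Qx‖ ‖Ax‖ ≤ λ₁(G^k) λ₁(G)`, where the last step uses that for a
nonnegative symmetric matrix `λ₁` bounds every eigenvalue in absolute value.

For `k ≥ 2` the inequality `xᵀPx ≤ xᵀQAx` is strict: if `x` is not constant the Laplacian form is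
positive, and if it is constant, a path `u - m - w` with `u ≠ w` (which exists because `G` is
connected with at least three vertices) gives `(QA)_{um} ≥ 1`, so `P + D < QA + A` at `(u, m)`.
Iterating the weak inequality gives `λ₁(G^k) ≤ λ₁(G)^k`.
-/

open Matrix Finset

section SymmetricMatrix

variable {n : Type*} [Fintype n]

lemma Matrix.dotProduct_mulVec_eq_sum_sum (a : n → ℝ) (M : Matrix n n ℝ) (b : n → ℝ) :
    a ⬝ᵥ M *ᵥ b = ∑ i, ∑ j, a i * M i j * b j := by
  simp only [dotProduct, mulVec, mul_sum, mul_assoc]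

lemma Matrix.dotProduct_mulVec_le_of_le {M M' : Matrix n n ℝ} (h : ∀ i j, M i j ≤ M' i j)
    {x : n → ℝ} (hx : 0 ≤ x) : x ⬝ᵥ M *ᵥ x ≤ x ⬝ᵥ M' *ᵥ x := by
  simp only [dotProduct_mulVec_eq_sum_sum]
  exact sum_le_sum fun i _ ↦ sum_le_sum fun j _ ↦
    mul_le_mul_of_nonneg_right (mul_le_mul_of_nonneg_left (h i j) (hx i)) (hx j)

lemma Matrix.dotProduct_mulVec_lt_of_le_of_lt {M M' : Matrix n n ℝ} (h : ∀ i j, M i j ≤ M' i j)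
    {u v : n} (huv : M u v < M' u v) {x : n → ℝ} (hx : 0 ≤ x) (hxu : 0 < x u) (hxv : 0 < x v) :
    x ⬝ᵥ M *ᵥ x < x ⬝ᵥ M' *ᵥ x := by
  simp only [dotProduct_mulVec_eq_sum_sum]
  have hle : ∀ i j, x i * M i j * x j ≤ x i * M' i j * x j := fun i j ↦
    mul_le_mul_of_nonneg_right (mul_le_mul_of_nonneg_left (h i j) (hx i)) (hx j)
  refine sum_lt_sum (fun i _ ↦ sum_le_sum fun j _ ↦ hle i j) ⟨u, mem_univ u, ?_⟩
  exact sum_lt_sum (fun j _ ↦ hle u j) ⟨v, mem_univ v, by gcongr⟩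

lemma Matrix.dotProduct_mulVec_eq_transpose_mulVec_dotProduct (A : Matrix n n ℝ) (a b : n → ℝ) :
    a ⬝ᵥ A *ᵥ b = (Aᵀ *ᵥ a) ⬝ᵥ b := by
  rw [dotProduct_mulVec, mulVec_transpose]

lemma Matrix.abs_dotProduct_mulVec_le {M : Matrix n n ℝ} (hM : ∀ i j, 0 ≤ M i j) (y : n → ℝ) :
    |y ⬝ᵥ M *ᵥ y| ≤ |y| ⬝ᵥ M *ᵥ |y| := by
  simp only [dotProduct_mulVec_eq_sum_sum, Pi.abs_apply]
  refine (abs_sum_le_sum_abs _ _).trans (sum_le_sum fun i _ ↦ ?_)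
  refine (abs_sum_le_sum_abs _ _).trans (sum_le_sum fun j _ ↦ ?_)
  rw [abs_mul, abs_mul, abs_of_nonneg (hM i j)]

lemma Matrix.abs_dotProduct_abs (y : n → ℝ) : |y| ⬝ᵥ |y| = y ⬝ᵥ y := by
  simp [dotProduct, abs_mul_abs_self]

variable [DecidableEq n]

lemma Matrix.unitaryGroup.mulVec_dotProduct_mulVec (U : unitaryGroup n ℝ) (a b : n → ℝ) :
    ((U : Matrix n n ℝ) *ᵥ a) ⬝ᵥ ((U : Matrix n n ℝ) *ᵥ b) = a ⬝ᵥ b := by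
  rw [dotProduct_mulVec_eq_transpose_mulVec_dotProduct, mulVec_mulVec,
    ← conjTranspose_eq_transpose_of_trivial, ← star_eq_conjTranspose, Unitary.coe_star_mul_self,
    one_mulVec]

namespace Matrix.IsHermitian

variable {M : Matrix n n ℝ}

noncomputable def eigenCoords (hM : M.IsHermitian) (y : n → ℝ) : n → ℝ :=
  star (hM.eigenvectorUnitary : Matrix n n ℝ) *ᵥ y

lemma mulVec_eq_eigenvectorUnitary_mulVec (hM : M.IsHermitian) (y : n → ℝ) :
    M *ᵥ y = (hM.eigenvectorUnitary : Matrix n n ℝ) *ᵥ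
      (diagonal hM.eigenvalues *ᵥ hM.eigenCoords y) := by
  conv_lhs => rw [hM.spectral_theorem]
  simp [eigenCoords, mulVec_mulVec, mul_assoc]

lemma dotProduct_self_eq_sum_eigenCoords (hM : M.IsHermitian) (y : n → ℝ) :
    y ⬝ᵥ y = ∑ i, hM.eigenCoords y i ^ 2 := by
  rw [← unitaryGroup.mulVec_dotProduct_mulVec (star hM.eigenvectorUnitary) y y]
  simp [eigenCoords, dotProduct, sq]

lemma dotProduct_mulVec_eq_sum_eigenCoords (hM : M.IsHermitian) (y : n → ℝ) :
    y ⬝ᵥ M *ᵥ y = ∑ i, hM.eigenvalues i * hM.eigenCoords y i ^ 2 := by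
  rw [hM.mulVec_eq_eigenvectorUnitary_mulVec, dotProduct_mulVec_eq_transpose_mulVec_dotProduct,
    ← conjTranspose_eq_transpose_of_trivial, ← star_eq_conjTranspose]
  simp [eigenCoords, dotProduct, mulVec_diagonal, sq, mul_left_comm]

lemma mulVec_dotProduct_mulVec_eq_sum_eigenCoords (hM : M.IsHermitian) (y : n → ℝ) :
    (M *ᵥ y) ⬝ᵥ (M *ᵥ y) = ∑ i, hM.eigenvalues i ^ 2 * hM.eigenCoords y i ^ 2 := by
  rw [hM.mulVec_eq_eigenvectorUnitary_mulVec, unitaryGroup.mulVec_dotProduct_mulVec]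
  simp [dotProduct, mulVec_diagonal, sq, mul_left_comm, mul_assoc]

lemma eigenvalues_le_sSup_spectrum (hM : M.IsHermitian) (i : n) :
    hM.eigenvalues i ≤ sSup (spectrum ℝ M) := by
  rw [hM.spectrum_real_eq_range_eigenvalues]
  exact le_csSup (Set.finite_range _).bddAbove ⟨i, rfl⟩

lemma dotProduct_mulVec_le_sSup_spectrum_mul (hM : M.IsHermitian) (y : n → ℝ) :
    y ⬝ᵥ M *ᵥ y ≤ sSup (spectrum ℝ M) * (y ⬝ᵥ y) := by
  rw [hM.dotProduct_mulVec_eq_sum_eigenCoords, hM.dotProduct_self_eq_sum_eigenCoords, mul_sum]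
  gcongr with i
  exact hM.eigenvalues_le_sSup_spectrum i

lemma mulVec_dotProduct_mulVec_le (hM : M.IsHermitian) {c : ℝ}
    (hc : ∀ i, |hM.eigenvalues i| ≤ c) (y : n → ℝ) :
    (M *ᵥ y) ⬝ᵥ (M *ᵥ y) ≤ c ^ 2 * (y ⬝ᵥ y) := by
  rw [hM.mulVec_dotProduct_mulVec_eq_sum_eigenCoords, hM.dotProduct_self_eq_sum_eigenCoords,
    mul_sum]
  refine sum_le_sum fun i _ ↦ mul_le_mul_of_nonneg_right ?_ (sq_nonneg _)
  exact sq_le_sq' (abs_le.mp (hc i)).1 (abs_le.mp (hc i)).2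

lemma eigenvectorBasis_dotProduct_self (hM : M.IsHermitian) (i : n) :
    ⇑(hM.eigenvectorBasis i) ⬝ᵥ ⇑(hM.eigenvectorBasis i) = 1 := by
  have h : inner ℝ (hM.eigenvectorBasis i) (hM.eigenvectorBasis i) = 1 := by
    rw [real_inner_self_eq_norm_sq, hM.eigenvectorBasis.orthonormal.1 i, one_pow]
  rw [EuclideanSpace.inner_eq_star_dotProduct] at h
  simpa using h

lemma eigenvectorBasis_dotProduct_mulVec (hM : M.IsHermitian) (i : n) :
    ⇑(hM.eigenvectorBasis i) ⬝ᵥ M *ᵥ ⇑(hM.eigenvectorBasis i) = hM.eigenvalues i := by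
  rw [hM.mulVec_eigenvectorBasis, dotProduct_smul, hM.eigenvectorBasis_dotProduct_self,
    smul_eq_mul, mul_one]

lemma exists_eigenvalues_eq_sSup_spectrum (hM : M.IsHermitian) [Nonempty n] :
    ∃ i, hM.eigenvalues i = sSup (spectrum ℝ M) := by
  rw [hM.spectrum_real_eq_range_eigenvalues]
  exact (Set.range_nonempty hM.eigenvalues).csSup_mem (Set.finite_range _)

lemma abs_eigenvalues_le_sSup_spectrum (hM : M.IsHermitian) (hM0 : ∀ i j, 0 ≤ M i j) (i : n) :
    |hM.eigenvalues i| ≤ sSup (spectrum ℝ M) := by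
  set b : n → ℝ := ⇑(hM.eigenvectorBasis i)
  have hb : |b| ⬝ᵥ |b| = 1 := by
    rw [abs_dotProduct_abs, hM.eigenvectorBasis_dotProduct_self i]
  calc |hM.eigenvalues i| = |b ⬝ᵥ M *ᵥ b| := by rw [hM.eigenvectorBasis_dotProduct_mulVec]
    _ ≤ |b| ⬝ᵥ M *ᵥ |b| := abs_dotProduct_mulVec_le hM0 b
    _ ≤ sSup (spectrum ℝ M) := by
      simpa [hb] using hM.dotProduct_mulVec_le_sSup_spectrum_mul |b|

lemma sSup_spectrum_nonneg (hM : M.IsHermitian) (hM0 : ∀ i j, 0 ≤ M i j) [Nonempty n] :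
    0 ≤ sSup (spectrum ℝ M) :=
  (abs_nonneg _).trans (hM.abs_eigenvalues_le_sSup_spectrum hM0 (Classical.arbitrary n))

lemma exists_nonneg_sSup_spectrum_le (hM : M.IsHermitian) (hM0 : ∀ i j, 0 ≤ M i j)
    [Nonempty n] : ∃ x : n → ℝ, 0 ≤ x ∧ x ⬝ᵥ x = 1 ∧ sSup (spectrum ℝ M) ≤ x ⬝ᵥ M *ᵥ x := by
  obtain ⟨i, hi⟩ := hM.exists_eigenvalues_eq_sSup_spectrum
  set b : n → ℝ := ⇑(hM.eigenvectorBasis i)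
  refine ⟨|b|, abs_nonneg b, ?_, ?_⟩
  · rw [abs_dotProduct_abs, hM.eigenvectorBasis_dotProduct_self i]
  · rw [← hi, ← hM.eigenvectorBasis_dotProduct_mulVec]
    exact (le_abs_self _).trans (abs_dotProduct_mulVec_le hM0 b)

lemma mulVec_dotProduct_mulVec_le_sSup_spectrum_mul {M' : Matrix n n ℝ} (hM : M.IsHermitian)
    (hM0 : ∀ i j, 0 ≤ M i j) (hM' : M'.IsHermitian) (hM'0 : ∀ i j, 0 ≤ M' i j) [Nonempty n]
    {x : n → ℝ} (hx : x ⬝ᵥ x = 1) :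
    (M *ᵥ x) ⬝ᵥ (M' *ᵥ x) ≤ sSup (spectrum ℝ M) * sSup (spectrum ℝ M') := by
  have hMx := hM.mulVec_dotProduct_mulVec_le (hM.abs_eigenvalues_le_sSup_spectrum hM0) x
  have hM'x := hM'.mulVec_dotProduct_mulVec_le (hM'.abs_eigenvalues_le_sSup_spectrum hM'0) x
  rw [hx, mul_one] at hMx hM'x
  have hCS :
      ((M *ᵥ x) ⬝ᵥ (M' *ᵥ x)) ^ 2 ≤ ((M *ᵥ x) ⬝ᵥ (M *ᵥ x)) * ((M' *ᵥ x) ⬝ᵥ (M' *ᵥ x)) := by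
    simpa [dotProduct, sq] using sum_mul_sq_le_sq_mul_sq univ (M *ᵥ x) (M' *ᵥ x)
  have hρ := hM.sSup_spectrum_nonneg hM0
  have hρ' := hM'.sSup_spectrum_nonneg hM'0
  refine (le_abs_self _).trans (abs_le_of_sq_le_sq (hCS.trans ?_) (mul_nonneg hρ hρ'))
  rw [mul_pow]
  exact mul_le_mul hMx hM'x (by simpa using dotProduct_self_star_nonneg (M' *ᵥ x)) (sq_nonneg _)

end Matrix.IsHermitian
end SymmetricMatrix

namespace SimpleGraph

variable {V : Type*}

lemma adjMatrix_nonneg (G : SimpleGraph V) [DecidableRel G.Adj] (u v : V) :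
    0 ≤ G.adjMatrix ℝ u v := by
  rw [adjMatrix_apply]
  split_ifs <;> norm_num

section Power

variable (G : SimpleGraph V)

lemma power_adj_of_adj {k : ℕ} (hk : 1 ≤ k) {u v : V} (h : G.Adj u v) : (G.power k).Adj u v :=
  ⟨h.ne, h.reachable, (dist_eq_one_iff_adj.mpr h).trans_le hk⟩

lemma power_one : G.power 1 = G := by
  ext u v
  refine ⟨fun ⟨hne, hr, hd⟩ ↦ ?_, G.power_adj_of_adj le_rfl⟩
  exact dist_eq_one_iff_adj.mp (le_antisymm hd (hr.pos_dist_of_ne hne))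

lemma power_adj_of_adj_of_adj {k : ℕ} (hk : 2 ≤ k) {u m v : V} (hum : G.Adj u m)
    (hmv : G.Adj m v) (huv : u ≠ v) : (G.power k).Adj u v := by
  let p : G.Walk u v := .cons hum (.cons hmv .nil)
  exact ⟨huv, p.reachable, (dist_le p).trans hk⟩

lemma exists_power_adj_adj_of_power_succ_adj {k : ℕ} {u v : V} (h : (G.power (k + 1)).Adj u v)
    (hnadj : ¬G.Adj u v) : ∃ w, (G.power k).Adj u w ∧ G.Adj w v := by
  obtain ⟨huv, hr, hd⟩ := h
  obtain ⟨p, hp⟩ := hr.symm.exists_walk_length_eq_dist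
  rw [dist_comm] at hp
  cases p with
  | nil => exact absurd rfl huv
  | @cons _ w _ hvw q =>
    refine ⟨w, ⟨?_, q.reverse.reachable, ?_⟩, hvw.symm⟩
    · rintro rfl
      exact hnadj hvw.symm
    · have := dist_le q.reverse
      simp only [Walk.length_reverse, Walk.length_cons] at this hp
      omega

end Power

lemma Connected.exists_adj_adj_ne [Fintype V] [DecidableEq V] {G : SimpleGraph V}
    (hconn : G.Connected) (h3 : 3 ≤ Fintype.card V) :
    ∃ u m v, G.Adj u m ∧ G.Adj m v ∧ u ≠ v := by
  obtain ⟨a⟩ := hconn.nonempty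
  obtain ⟨z, hz⟩ := Fintype.exists_ne_of_one_lt_card (by omega) a
  obtain ⟨⟨⟨a', b⟩, hab⟩, -, ha', hb⟩ :=
    (hconn.preconnected a z).some.exists_boundary_dart {a} rfl hz
  simp only [Set.mem_singleton_iff] at ha' hb
  subst ha'
  obtain ⟨c, hc⟩ : ∃ c, c ∉ ({a', b} : Finset V) := by
    by_contra! h
    have := card_le_card (fun x _ ↦ h x : (univ : Finset V) ⊆ {a', b})
    have := card_le_two (a := a') (b := b)
    simp only [card_univ] at *
    omega
  obtain ⟨⟨⟨d, e⟩, hde⟩, -, hd, he⟩ :=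
    (hconn.preconnected a' c).some.exists_boundary_dart {a', b} (by simp) (by simpa using hc)
  simp only [Set.mem_insert_iff, Set.mem_singleton_iff, not_or] at hd he
  rcases hd with rfl | rfl
  · exact ⟨b, d, e, hab.symm, hde, Ne.symm he.2⟩
  · exact ⟨a', d, e, hab, hde, Ne.symm he.1⟩

section AdjMatrix

variable [Fintype V]

lemma one_le_adjMatrix_mul_adjMatrix_apply {H H' : SimpleGraph V} [DecidableRel H.Adj]
    [DecidableRel H'.Adj] {u w v : V} (h : H.Adj u w) (h' : H'.Adj w v) :
    1 ≤ (H.adjMatrix ℝ * H'.adjMatrix ℝ) u v := by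
  rw [mul_adjMatrix_apply]
  calc (1 : ℝ) = H.adjMatrix ℝ u w := by simp [h]
    _ ≤ _ := single_le_sum (fun w _ ↦ H.adjMatrix_nonneg u w) (by simpa using h'.symm)

lemma adjMatrix_mul_adjMatrix_apply_self {G H : SimpleGraph V} [DecidableRel G.Adj]
    [DecidableRel H.Adj] (hle : G ≤ H) (u : V) :
    (H.adjMatrix ℝ * G.adjMatrix ℝ) u u = G.degree u := by
  rw [mul_adjMatrix_apply, ← card_neighborFinset_eq_degree, card_eq_sum_ones, Nat.cast_sum,
    Nat.cast_one]
  exact sum_congr rfl fun w hw ↦ by simp [hle ((mem_neighborFinset _ _ _).mp hw)]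

variable [DecidableEq V] (G : SimpleGraph V) [DecidableRel G.Adj]

lemma dotProduct_adjMatrix_mulVec_le_degMatrix (x : V → ℝ) :
    x ⬝ᵥ G.adjMatrix ℝ *ᵥ x ≤ x ⬝ᵥ G.degMatrix ℝ *ᵥ x := by
  have h := (posSemidef_lapMatrix ℝ G).dotProduct_mulVec_nonneg x
  rw [lapMatrix, sub_mulVec, dotProduct_sub, star_trivial] at h
  linarith

lemma power_succ_adjMatrix_add_degMatrix_le {k : ℕ} (hk : 1 ≤ k) (u v : V) :
    (G.power (k + 1)).adjMatrix ℝ u v + G.degMatrix ℝ u v ≤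
      ((G.power k).adjMatrix ℝ * G.adjMatrix ℝ) u v + G.adjMatrix ℝ u v := by
  have hN : 0 ≤ ((G.power k).adjMatrix ℝ * G.adjMatrix ℝ) u v :=
    sum_nonneg fun w _ ↦ mul_nonneg (adjMatrix_nonneg _ u w) (adjMatrix_nonneg _ w v)
  rcases eq_or_ne u v with rfl | huv
  · rw [adjMatrix_mul_adjMatrix_apply_self (fun _ _ h ↦ G.power_adj_of_adj hk h)]
    simp [degMatrix]
  rw [degMatrix, diagonal_apply_ne _ huv, add_zero]
  by_cases hP : (G.power (k + 1)).Adj u v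
  · by_cases hA : G.Adj u v
    · rw [adjMatrix_apply, if_pos hP, adjMatrix_apply, if_pos hA]
      linarith
    · obtain ⟨w, huw, hwv⟩ := G.exists_power_adj_adj_of_power_succ_adj hP hA
      rw [adjMatrix_apply, if_pos hP]
      linarith [one_le_adjMatrix_mul_adjMatrix_apply huw hwv, G.adjMatrix_nonneg u v]
  · rw [adjMatrix_apply, if_neg hP]
    linarith [G.adjMatrix_nonneg u v]

variable {G}

lemma Connected.dotProduct_adjMatrix_mulVec_lt_degMatrix (hconn : G.Connected) {x : V → ℝ}
    (hx : ∃ u v, x u ≠ x v) : x ⬝ᵥ G.adjMatrix ℝ *ᵥ x < x ⬝ᵥ G.degMatrix ℝ *ᵥ x := by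
  have hL : x ⬝ᵥ G.lapMatrix ℝ *ᵥ x ≠ 0 := by
    intro h
    rw [← toLinearMap₂'_apply', lapMatrix_toLinearMap₂'_apply'_eq_zero_iff_forall_reachable] at h
    obtain ⟨u, v, huv⟩ := hx
    exact huv (h u v (hconn.preconnected u v))
  have h := (posSemidef_lapMatrix ℝ G).dotProduct_mulVec_nonneg x
  rw [star_trivial] at h
  rw [lapMatrix, sub_mulVec, dotProduct_sub] at h hL
  exact lt_of_le_of_ne (by linarith) (fun h' ↦ hL (by linarith))

lemma dotProduct_mulVec_le_of_add_degMatrix_le {M M' : Matrix V V ℝ}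
    (h : ∀ u v, M u v + G.degMatrix ℝ u v ≤ M' u v + G.adjMatrix ℝ u v) {x : V → ℝ}
    (hx : 0 ≤ x) : x ⬝ᵥ M *ᵥ x ≤ x ⬝ᵥ M' *ᵥ x := by
  have hle := dotProduct_mulVec_le_of_le (M := M + G.degMatrix ℝ) (M' := M' + G.adjMatrix ℝ) h hx
  have hAD := G.dotProduct_adjMatrix_mulVec_le_degMatrix x
  simp only [add_mulVec, dotProduct_add] at hle
  linarith

lemma Connected.dotProduct_mulVec_lt_of_add_degMatrix_le (hconn : G.Connected)
    {M M' : Matrix V V ℝ} (h : ∀ u v, M u v + G.degMatrix ℝ u v ≤ M' u v + G.adjMatrix ℝ u v)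
    (hlt : ∃ u v, M u v + G.degMatrix ℝ u v < M' u v + G.adjMatrix ℝ u v) {x : V → ℝ}
    (hx : 0 ≤ x) (hx0 : x ≠ 0) : x ⬝ᵥ M *ᵥ x < x ⬝ᵥ M' *ᵥ x := by
  have hAD := G.dotProduct_adjMatrix_mulVec_le_degMatrix x
  have hle := dotProduct_mulVec_le_of_le (M := M + G.degMatrix ℝ) (M' := M' + G.adjMatrix ℝ) h hx
  simp only [add_mulVec, dotProduct_add] at hle
  by_cases hconst : ∃ u v, x u ≠ x v
  · have := hconn.dotProduct_adjMatrix_mulVec_lt_degMatrix hconst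
    linarith
  -- `x` is a positive constant vector, so the quadratic form sees the strict entry
  push Not at hconst
  obtain ⟨w, hw⟩ := Function.ne_iff.mp hx0
  have hpos : ∀ u, 0 < x u := fun u ↦ (hconst w u) ▸ lt_of_le_of_ne (hx w) (Ne.symm hw)
  obtain ⟨u, v, huv⟩ := hlt
  have hstrict := dotProduct_mulVec_lt_of_le_of_lt (M := M + G.degMatrix ℝ)
    (M' := M' + G.adjMatrix ℝ) h huv hx (hpos u) (hpos v)
  simp only [add_mulVec, dotProduct_add] at hstrict
  linarith

lemma Connected.exists_power_succ_adjMatrix_add_degMatrix_lt (hconn : G.Connected)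
    (h3 : 3 ≤ Fintype.card V) {k : ℕ} (hk : 2 ≤ k) : ∃ u v,
    (G.power (k + 1)).adjMatrix ℝ u v + G.degMatrix ℝ u v <
      ((G.power k).adjMatrix ℝ * G.adjMatrix ℝ) u v + G.adjMatrix ℝ u v := by
  obtain ⟨u, m, w, hum, hmw, huw⟩ := hconn.exists_adj_adj_ne h3
  have := one_le_adjMatrix_mul_adjMatrix_apply (G.power_adj_of_adj_of_adj hk hum hmw huw) hmw.symm
  refine ⟨u, m, ?_⟩
  rw [degMatrix, diagonal_apply_ne _ hum.ne, add_zero, adjMatrix_apply, adjMatrix_apply,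
    if_pos (G.power_adj_of_adj (by omega) hum), if_pos hum]
  linarith

end AdjMatrix

end SimpleGraph

section SpectralRadius

variable {V : Type*} [Fintype V] [DecidableEq V]

lemma lam1_eq_sSup_spectrum (H : SimpleGraph V) [DecidableRel H.Adj] :
    lam1 H = sSup (spectrum ℝ (H.adjMatrix ℝ)) := by
  unfold lam1
  congr!

lemma lam1_nonneg [Nonempty V] (H : SimpleGraph V) : 0 ≤ lam1 H := by
  classical
  rw [lam1_eq_sSup_spectrum]
  exact (H.isHermitian_adjMatrix ℝ).sSup_spectrum_nonneg H.adjMatrix_nonneg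

lemma exists_nonneg_lam1_le [Nonempty V] (H : SimpleGraph V) [DecidableRel H.Adj] :
    ∃ x : V → ℝ, 0 ≤ x ∧ x ⬝ᵥ x = 1 ∧ lam1 H ≤ x ⬝ᵥ H.adjMatrix ℝ *ᵥ x := by
  rw [lam1_eq_sSup_spectrum]
  exact (H.isHermitian_adjMatrix ℝ).exists_nonneg_sSup_spectrum_le H.adjMatrix_nonneg

lemma dotProduct_adjMatrix_mul_adjMatrix_mulVec_le [Nonempty V] (H H' : SimpleGraph V)
    [DecidableRel H.Adj] [DecidableRel H'.Adj] {x : V → ℝ} (hx : x ⬝ᵥ x = 1) :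
    x ⬝ᵥ (H.adjMatrix ℝ * H'.adjMatrix ℝ) *ᵥ x ≤ lam1 H * lam1 H' := by
  rw [← mulVec_mulVec, dotProduct_mulVec_eq_transpose_mulVec_dotProduct,
    SimpleGraph.transpose_adjMatrix, lam1_eq_sSup_spectrum, lam1_eq_sSup_spectrum]
  exact (H.isHermitian_adjMatrix ℝ).mulVec_dotProduct_mulVec_le_sSup_spectrum_mul
    H.adjMatrix_nonneg (H'.isHermitian_adjMatrix ℝ) H'.adjMatrix_nonneg hx

variable (G : SimpleGraph V) [DecidableRel G.Adj]

lemma lam1_power_succ_le [Nonempty V] {k : ℕ} (hk : 1 ≤ k) :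
    lam1 (G.power (k + 1)) ≤ lam1 (G.power k) * lam1 G := by
  obtain ⟨x, hx, hxx, hlam⟩ := exists_nonneg_lam1_le (G.power (k + 1))
  calc lam1 (G.power (k + 1)) ≤ x ⬝ᵥ (G.power (k + 1)).adjMatrix ℝ *ᵥ x := hlam
    _ ≤ x ⬝ᵥ ((G.power k).adjMatrix ℝ * G.adjMatrix ℝ) *ᵥ x :=
      SimpleGraph.dotProduct_mulVec_le_of_add_degMatrix_le
        (G.power_succ_adjMatrix_add_degMatrix_le hk) hx
    _ ≤ lam1 (G.power k) * lam1 G := dotProduct_adjMatrix_mul_adjMatrix_mulVec_le _ _ hxx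

lemma lam1_power_succ_lt (hconn : G.Connected) (h3 : 3 ≤ Fintype.card V) {k : ℕ} (hk : 2 ≤ k) :
    lam1 (G.power (k + 1)) < lam1 (G.power k) * lam1 G := by
  have := hconn.nonempty
  obtain ⟨x, hx, hxx, hlam⟩ := exists_nonneg_lam1_le (G.power (k + 1))
  have hx0 : x ≠ 0 := by
    rintro rfl
    simp at hxx
  calc lam1 (G.power (k + 1)) ≤ x ⬝ᵥ (G.power (k + 1)).adjMatrix ℝ *ᵥ x := hlam
    _ < x ⬝ᵥ ((G.power k).adjMatrix ℝ * G.adjMatrix ℝ) *ᵥ x :=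
      hconn.dotProduct_mulVec_lt_of_add_degMatrix_le
        (G.power_succ_adjMatrix_add_degMatrix_le (by omega))
        (hconn.exists_power_succ_adjMatrix_add_degMatrix_lt h3 hk) hx hx0
    _ ≤ lam1 (G.power k) * lam1 G := dotProduct_adjMatrix_mul_adjMatrix_mulVec_le _ _ hxx

lemma lam1_power_le_pow [Nonempty V] {k : ℕ} (hk : 1 ≤ k) : lam1 (G.power k) ≤ lam1 G ^ k := by
  induction k, hk using Nat.le_induction with
  | base => rw [G.power_one, pow_one]
  | succ k hk ih =>
    calc lam1 (G.power (k + 1)) ≤ lam1 (G.power k) * lam1 G := lam1_power_succ_le G hk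
      _ ≤ lam1 G ^ k * lam1 G := by gcongr; exact lam1_nonneg G
      _ = lam1 G ^ (k + 1) := (pow_succ _ _).symm

end SpectralRadius

theorem lam1_power_lt_general {V : Type*} [Fintype V]
    (G : SimpleGraph V) (hconn : G.Connected)
    (h3 : 3 ≤ Fintype.card V) (γ : ℕ) (hγ : 3 ≤ γ) :
    lam1 (G.power γ) < lam1 (G.power (γ - 1)) * lam1 G ∧
    lam1 (G.power γ) < lam1 G ^ γ := by
  classical
  have := hconn.nonempty
  obtain ⟨k, rfl⟩ : ∃ k, γ = k + 1 := ⟨γ - 1, by omega⟩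
  rw [Nat.add_sub_cancel]
  have hstep := lam1_power_succ_lt G hconn h3 (by omega : 2 ≤ k)
  refine ⟨hstep, hstep.trans_le ?_⟩
  rw [pow_succ]
  gcongr
  · exact lam1_nonneg G
  · exact lam1_power_le_pow G (by omega)

/-- For γ ≥ 3: λ₁(G^γ) < λ₁(G^{γ-1})·λ₁(G), and consequently λ₁(G^γ) < λ₁(G)^γ. -/
theorem lam1_power_lt {V : Type*} [Fintype V] [DecidableEq V]
    (G : SimpleGraph V) [DecidableRel G.Adj] (hconn : G.Connected)
    (h3 : 3 ≤ Fintype.card V) (γ : ℕ) (hγ : 3 ≤ γ) :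
    lam1 (G.power γ) < lam1 (G.power (γ - 1)) * lam1 G ∧
    lam1 (G.power γ) < lam1 G ^ γ :=
  lam1_power_lt_general G hconn h3 γ hγ
end
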